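/- arXiv:math/9905061 — 5 statements merged into one kernel-verified Lean document; each statement's English description precedes it below -/
import Mathlib

section
/- For every ε' > 0 there exists ε > 0 such that for all Banach spaces X, Y and every surjective map T : X → Y with T(0) = 0 satisfying (1-ε)‖x-y‖ ≤ ‖T(x)-T(y)‖ ≤ (1+ε)‖x-y‖ for all x, y ∈ X, one has ‖T(x+y) - T(x) - T(y)‖ ≤ ε'(‖x‖ + ‖y‖) for all x, y ∈ X. -/
/-!
Väisälä's proof of the Mazur–Ulam theorem, made quantitative. Fix `p, q` with midpoint `m`, let
`σ` be the reflection in `m` and `τ` the reflection in the midpoint of `T p, T q`. Then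
`u = T⁻¹ τ T σ` is a `K`-bi-Lipschitz permutation fixing `p` and `q`, with
`K = (1 + ε) / (1 - ε)`, and its displacement at `m` controls the midpoint defect of `T`.
Replacing `u` by `σ u⁻¹ σ u` keeps `p, q` fixed, squares the Lipschitz constant and doubles the
displacement at `m` up to a factor `K`. After `n` steps the displacement has grown by `2ⁿ`, yet it
stays below `(K ^ 2ⁿ + 1) ‖p - m‖` because `p` is fixed; for `ε` small in terms of `n`, `K ^ 2ⁿ`
is close to `1`, so the midpoint defect is `O(2⁻ⁿ ‖p - q‖)`. When `T 0 = 0`, the additivity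
defect of `T` is a combination of three midpoint defects.
-/

open scoped NNReal
open Filter Topology

section Torsor

variable {V P W Q : Type*} [NormedAddCommGroup V] [NormedSpace ℝ V] [MetricSpace P]
  [NormedAddTorsor V P] [NormedAddCommGroup W] [NormedSpace ℝ W] [MetricSpace Q]
  [NormedAddTorsor W Q]

theorem exists_equiv_lipschitz_sq_two_mul_dist_midpoint_le {K : ℝ≥0} {u : P ≃ P}
    (hu : LipschitzWith K u) (hu' : LipschitzWith K u.symm) {p q : P} (hp : u p = p)
    (hq : u q = q) :
    ∃ w : P ≃ P, LipschitzWith (K ^ 2) w ∧ LipschitzWith (K ^ 2) w.symm ∧ w p = p ∧ w q = q ∧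
      2 * dist (u (midpoint ℝ p q)) (midpoint ℝ p q) ≤
        K * dist (w (midpoint ℝ p q)) (midpoint ℝ p q) := by
  set m := midpoint ℝ p q
  set σ := Equiv.pointReflection m
  have hσ : LipschitzWith 1 σ := (AffineIsometryEquiv.pointReflection ℝ m).lipschitz
  have hp' : u.symm p = p := u.symm_apply_eq.mpr hp.symm
  have hq' : u.symm q = q := u.symm_apply_eq.mpr hq.symm
  refine ⟨u.trans (σ.trans (u.symm.trans σ)), ?_, ?_, ?_, ?_, ?_⟩
  · exact (hσ.comp (hu'.comp (hσ.comp hu))).weaken (by simp [sq])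
  · have hσ' : LipschitzWith 1 σ.symm := by rwa [Equiv.pointReflection_symm]
    exact (hu'.comp (hσ'.comp (hu.comp hσ'))).weaken (by simp [sq])
  · simp [m, σ, hp, hq']
  · simp [m, σ, hp', hq]
  · calc 2 * dist (u m) m = dist (σ (u m)) (u m) := by
          rw [dist_pointReflection_right ℝ, Real.norm_two, dist_comm]
      _ = dist (u (u.symm (σ (u m)))) (u (u.symm (u m))) := by
          simp only [Equiv.apply_symm_apply]
      _ ≤ K * dist (u.symm (σ (u m))) (u.symm (u m)) := hu.dist_le_mul _ _
      _ = K * dist (σ (u.symm (σ (u m)))) m := by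
          rw [u.symm_apply_apply, dist_pointReflection_left, dist_comm]

theorem exists_equiv_lipschitz_two_pow_mul_dist_midpoint_le {K : ℝ≥0} {u : P ≃ P}
    (hu : LipschitzWith K u) (hu' : LipschitzWith K u.symm) {p q : P} (hp : u p = p)
    (hq : u q = q) (n : ℕ) :
    ∃ w : P ≃ P, LipschitzWith (K ^ 2 ^ n) w ∧ LipschitzWith (K ^ 2 ^ n) w.symm ∧
      w p = p ∧ w q = q ∧
      2 ^ n * dist (u (midpoint ℝ p q)) (midpoint ℝ p q) ≤
        K ^ (2 ^ n - 1) * dist (w (midpoint ℝ p q)) (midpoint ℝ p q) := by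
  induction n with
  | zero => exact ⟨u, by simpa using hu, by simpa using hu', hp, hq, by simp⟩
  | succ n ih =>
    obtain ⟨w, hw, hw', hwp, hwq, hle⟩ := ih
    obtain ⟨w₂, hw₂, hw₂', hw₂p, hw₂q, hle₂⟩ :=
      exists_equiv_lipschitz_sq_two_mul_dist_midpoint_le hw hw' hwp hwq
    have hexp : 2 ^ (n + 1) - 1 = (2 ^ n - 1) + 2 ^ n := by
      have := Nat.one_le_two_pow (n := n); rw [pow_succ]; omega
    refine ⟨w₂, by rwa [← pow_mul, ← pow_succ] at hw₂, by rwa [← pow_mul, ← pow_succ] at hw₂',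
      hw₂p, hw₂q, ?_⟩
    calc (2 : ℝ) ^ (n + 1) * dist (u (midpoint ℝ p q)) (midpoint ℝ p q)
        ≤ 2 * (K ^ (2 ^ n - 1) * dist (w (midpoint ℝ p q)) (midpoint ℝ p q)) := by
          rw [pow_succ, mul_comm _ (2 : ℝ), mul_assoc]; gcongr
      _ = K ^ (2 ^ n - 1) * (2 * dist (w (midpoint ℝ p q)) (midpoint ℝ p q)) := by ring
      _ ≤ K ^ (2 ^ n - 1) * (K ^ 2 ^ n * dist (w₂ (midpoint ℝ p q)) (midpoint ℝ p q)) :=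
          mul_le_mul_of_nonneg_left (mod_cast hle₂) (by positivity)
      _ = _ := by rw [hexp]; ring

theorem two_pow_mul_dist_midpoint_le {K : ℝ≥0} {u : P ≃ P}
    (hu : LipschitzWith K u) (hu' : LipschitzWith K u.symm) {p q : P} (hp : u p = p)
    (hq : u q = q) (n : ℕ) :
    2 ^ n * dist (u (midpoint ℝ p q)) (midpoint ℝ p q) ≤
      K ^ (2 ^ n - 1) * (K ^ 2 ^ n + 1) * dist p (midpoint ℝ p q) := by
  obtain ⟨w, hw, -, hwp, -, hle⟩ :=
    exists_equiv_lipschitz_two_pow_mul_dist_midpoint_le hu hu' hp hq n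
  have hwm : dist (w (midpoint ℝ p q)) (midpoint ℝ p q) ≤
      (K ^ 2 ^ n + 1) * dist p (midpoint ℝ p q) :=
    calc dist (w (midpoint ℝ p q)) (midpoint ℝ p q)
        ≤ dist (w (midpoint ℝ p q)) (w p) + dist p (midpoint ℝ p q) := by
          simpa only [hwp] using dist_triangle _ (w p) _
      _ ≤ K ^ 2 ^ n * dist (midpoint ℝ p q) p + dist p (midpoint ℝ p q) := by
          gcongr; exact_mod_cast hw.dist_le_mul _ _
      _ = _ := by rw [dist_comm]; ring
  calc _ ≤ _ := hle
    _ ≤ _ := by rw [mul_assoc]; gcongr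

theorem two_pow_mul_dist_map_midpoint_le {K₁ K₂ : ℝ≥0} (e : P ≃ Q) (he : LipschitzWith K₁ e)
    (he' : LipschitzWith K₂ e.symm) (p q : P) (n : ℕ) :
    2 ^ (n + 1) * dist (e (midpoint ℝ p q)) (midpoint ℝ (e p) (e q)) ≤
      K₁ * (K₂ * K₁) ^ (2 ^ n - 1) * ((K₂ * K₁) ^ 2 ^ n + 1) * dist p (midpoint ℝ p q) := by
  set m := midpoint ℝ p q
  set σ := Equiv.pointReflection m
  set τ := Equiv.pointReflection (midpoint ℝ (e p) (e q))
  have hσ : LipschitzWith 1 σ := (AffineIsometryEquiv.pointReflection ℝ m).lipschitz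
  have hτ : LipschitzWith 1 τ := (AffineIsometryEquiv.pointReflection ℝ _).lipschitz
  have hσ' : LipschitzWith 1 σ.symm := by rwa [Equiv.pointReflection_symm]
  have hτ' : LipschitzWith 1 τ.symm := by rwa [Equiv.pointReflection_symm]
  set u := σ.trans (e.trans (τ.trans e.symm))
  have hu : LipschitzWith (K₂ * K₁) u := (he'.comp (hτ.comp (he.comp hσ))).weaken (by simp)
  have hu' : LipschitzWith (K₂ * K₁) u.symm :=
    (hσ'.comp (he'.comp (hτ'.comp he))).weaken (by simp)
  have hp : u p = p := by simp [u, σ, τ, m]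
  have hq : u q = q := by simp [u, σ, τ, m]
  have hdisp : 2 * dist (e m) (midpoint ℝ (e p) (e q)) ≤ K₁ * dist (u m) m :=
    calc 2 * dist (e m) (midpoint ℝ (e p) (e q)) = dist (τ (e m)) (e m) := by
          rw [dist_pointReflection_right ℝ, Real.norm_two, dist_comm]
      _ = dist (e (u m)) (e m) := by simp [u, σ]
      _ ≤ K₁ * dist (u m) m := he.dist_le_mul _ _
  calc (2 : ℝ) ^ (n + 1) * dist (e m) (midpoint ℝ (e p) (e q))
      = 2 ^ n * (2 * dist (e m) (midpoint ℝ (e p) (e q))) := by ring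
    _ ≤ 2 ^ n * (K₁ * dist (u m) m) := by gcongr
    _ = K₁ * (2 ^ n * dist (u m) m) := by ring
    _ ≤ K₁ * ((K₂ * K₁) ^ (2 ^ n - 1) * ((K₂ * K₁) ^ 2 ^ n + 1) * dist p m) :=
      mul_le_mul_of_nonneg_left (mod_cast two_pow_mul_dist_midpoint_le hu hu' hp hq n)
        K₁.coe_nonneg
    _ = _ := by ring

end Torsor

section NormedSpace

variable {E F : Type*} [NormedAddCommGroup E] [NormedSpace ℝ E] [NormedAddCommGroup F]
  [NormedSpace ℝ F]

theorem norm_map_add_sub_le_of_norm_map_midpoint_sub_le {f : E → F} {δ : ℝ} (hδ : 0 ≤ δ)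
    (hf : ∀ p q, ‖f (midpoint ℝ p q) - midpoint ℝ (f p) (f q)‖ ≤ δ * ‖p - q‖) (h0 : f 0 = 0)
    (x y : E) : ‖f (x + y) - f x - f y‖ ≤ 4 * δ * (‖x‖ + ‖y‖) := by
  have hxy : midpoint ℝ ((2 : ℝ) • x) ((2 : ℝ) • y) = x + y := by
    rw [midpoint_eq_smul_add, invOf_eq_inv]; module
  have hx : midpoint ℝ ((2 : ℝ) • x) 0 = x := by
    rw [midpoint_eq_smul_add, invOf_eq_inv]; module
  have hy : midpoint ℝ ((2 : ℝ) • y) 0 = y := by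
    rw [midpoint_eq_smul_add, invOf_eq_inv]; module
  have hsplit : f (x + y) - f x - f y =
      (f (midpoint ℝ ((2 : ℝ) • x) ((2 : ℝ) • y))
          - midpoint ℝ (f ((2 : ℝ) • x)) (f ((2 : ℝ) • y)))
        - (f (midpoint ℝ ((2 : ℝ) • x) 0) - midpoint ℝ (f ((2 : ℝ) • x)) (f 0))
        - (f (midpoint ℝ ((2 : ℝ) • y) 0) - midpoint ℝ (f ((2 : ℝ) • y)) (f 0)) := by
    simp only [hxy, hx, hy, h0, midpoint_eq_smul_add, invOf_eq_inv]; module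
  rw [hsplit]
  refine (norm_sub_le _ _).trans <| (add_le_add_left (norm_sub_le _ _) _).trans ?_
  have h1 := hf ((2 : ℝ) • x) ((2 : ℝ) • y)
  have h2 := hf ((2 : ℝ) • x) 0
  have h3 := hf ((2 : ℝ) • y) 0
  rw [← smul_sub, norm_smul, Real.norm_two] at h1
  rw [sub_zero, norm_smul, Real.norm_two] at h2 h3
  have := mul_le_mul_of_nonneg_left (norm_sub_le x y) hδ
  linarith

theorem two_pow_mul_norm_map_midpoint_sub_le {ε : ℝ} (hε₀ : 0 ≤ ε) (hε₁ : ε < 1)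
    {T : E → F} (hT : Function.Surjective T)
    (h : ∀ x y, (1 - ε) * ‖x - y‖ ≤ ‖T x - T y‖ ∧ ‖T x - T y‖ ≤ (1 + ε) * ‖x - y‖)
    (p q : E) (n : ℕ) :
    2 ^ (n + 2) * ‖T (midpoint ℝ p q) - midpoint ℝ (T p) (T q)‖ ≤
      (1 + ε) * ((1 - ε)⁻¹ * (1 + ε)) ^ (2 ^ n - 1) * (((1 - ε)⁻¹ * (1 + ε)) ^ 2 ^ n + 1) *
        ‖p - q‖ := by
  have hlip : LipschitzWith (1 + ε).toNNReal T :=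
    LipschitzWith.of_dist_le' fun x y => by simpa only [dist_eq_norm] using (h x y).2
  have hanti : AntilipschitzWith (1 - ε)⁻¹.toNNReal T :=
    AntilipschitzWith.of_le_mul_dist fun x y => by
      rw [Real.coe_toNNReal _ (inv_nonneg.2 (by linarith)), dist_eq_norm, dist_eq_norm,
        inv_mul_eq_div, le_div_iff₀ (by linarith), mul_comm]
      exact (h x y).1
  let e := Equiv.ofBijective T ⟨hanti.injective, hT⟩
  have key : 2 ^ (n + 1) * dist (T (midpoint ℝ p q)) (midpoint ℝ (T p) (T q)) ≤
      (1 + ε).toNNReal * ((1 - ε)⁻¹.toNNReal * (1 + ε).toNNReal) ^ (2 ^ n - 1) *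
        (((1 - ε)⁻¹.toNNReal * (1 + ε).toNNReal) ^ 2 ^ n + 1) * dist p (midpoint ℝ p q) :=
    two_pow_mul_dist_map_midpoint_le e hlip (hanti.to_rightInverse e.apply_symm_apply) p q n
  rw [Real.coe_toNNReal _ (by linarith), Real.coe_toNNReal _ (inv_nonneg.2 (by linarith)),
    dist_left_midpoint, Real.norm_two, dist_eq_norm, dist_eq_norm] at key
  rw [pow_succ]
  linarith

end NormedSpace

theorem eventually_midpoint_const_lt_four (n : ℕ) :
    ∀ᶠ ε in 𝓝 (0 : ℝ),
      (1 + ε) * ((1 - ε)⁻¹ * (1 + ε)) ^ (2 ^ n - 1) * (((1 - ε)⁻¹ * (1 + ε)) ^ 2 ^ n + 1) < 4 := by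
  have hc : ContinuousAt (fun ε : ℝ =>
      (1 + ε) * ((1 - ε)⁻¹ * (1 + ε)) ^ (2 ^ n - 1) * (((1 - ε)⁻¹ * (1 + ε)) ^ 2 ^ n + 1)) 0 := by
    fun_prop (disch := norm_num)
  exact hc.eventually (gt_mem_nhds (by norm_num))

theorem exists_pos_norm_map_midpoint_sub_le {δ : ℝ} (hδ : 0 < δ) :
    ∃ ε > 0, ∀ (E F : Type*) [NormedAddCommGroup E] [NormedSpace ℝ E] [NormedAddCommGroup F]
      [NormedSpace ℝ F] (T : E → F), Function.Surjective T →
      (∀ x y, (1 - ε) * ‖x - y‖ ≤ ‖T x - T y‖ ∧ ‖T x - T y‖ ≤ (1 + ε) * ‖x - y‖) →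
      ∀ p q, ‖T (midpoint ℝ p q) - midpoint ℝ (T p) (T q)‖ ≤ δ * ‖p - q‖ := by
  obtain ⟨n, hn⟩ := pow_unbounded_of_one_lt δ⁻¹ one_lt_two
  obtain ⟨ε, ⟨hC, hε₁⟩, hε₀⟩ := (((eventually_midpoint_const_lt_four n).and
    (gt_mem_nhds one_pos)).filter_mono (nhdsWithin_le_nhds (s := Set.Ioi 0)) |>.and
      self_mem_nhdsWithin).exists
  refine ⟨ε, hε₀, fun E F _ _ _ _ T hT h p q => ?_⟩
  have key := two_pow_mul_norm_map_midpoint_sub_le (le_of_lt hε₀) hε₁ hT h p q n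
  have h2n : (0 : ℝ) < 2 ^ n := by positivity
  have hδn : 1 ≤ 2 ^ n * δ := by rw [inv_lt_iff_one_lt_mul₀ hδ] at hn; exact hn.le
  have hd : 2 ^ n * ‖T (midpoint ℝ p q) - midpoint ℝ (T p) (T q)‖ ≤ ‖p - q‖ := by
    have := mul_le_mul_of_nonneg_right hC.le (norm_nonneg (p - q))
    rw [pow_add] at key
    linarith
  refine le_of_mul_le_mul_left ?_ h2n
  calc 2 ^ n * ‖T (midpoint ℝ p q) - midpoint ℝ (T p) (T q)‖ ≤ 1 * ‖p - q‖ := by rwa [one_mul]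
    _ ≤ 2 ^ n * (δ * ‖p - q‖) := by rw [← mul_assoc]; gcongr

theorem gevirtz_uniform_ulam :
    ∀ ε' : ℝ, 0 < ε' → ∃ ε : ℝ, 0 < ε ∧
      ∀ (X Y : Type) [NormedAddCommGroup X] [NormedSpace ℝ X] [CompleteSpace X]
        [NormedAddCommGroup Y] [NormedSpace ℝ Y] [CompleteSpace Y]
        (T : X → Y), Function.Surjective T → T 0 = 0 →
        (∀ x y : X, (1 - ε) * ‖x - y‖ ≤ ‖T x - T y‖ ∧ ‖T x - T y‖ ≤ (1 + ε) * ‖x - y‖) →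
        ∀ x y : X, ‖T (x + y) - T x - T y‖ ≤ ε' * (‖x‖ + ‖y‖) := by
  intro ε' hε'
  obtain ⟨ε, hε, hmid⟩ := exists_pos_norm_map_midpoint_sub_le (δ := ε' / 4) (by positivity)
  refine ⟨ε, hε, fun X Y _ _ _ _ _ _ T hT hT0 h x y => ?_⟩
  have := norm_map_add_sub_le_of_norm_map_midpoint_sub_le (by positivity) (hmid X Y T hT h) hT0
    x y
  rwa [mul_div_cancel₀ _ four_ne_zero] at this
end

section
/- If a Banach space X is reflexive, then for every ε > 0 and every sequence (xᵢ)_{i≥1} in the closed unit ball of X there exist k, r ∈ ℕ and convex coefficients a₁,…,a_k ≥ 0 with Σaᵢ = 1 and b₁,…,b_r ≥ 0 with Σbⱼ = 1 such that ‖Σ_{i=1}^k aᵢ xᵢ − Σ_{j=1}^r bⱼ x_{k+j}‖ < ε. -/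
/-! Viewed in the bidual with its weak-* topology, a bounded sequence has a cluster point by
Banach–Alaoglu, and by reflexivity this cluster point is some `z ∈ X`. A Hahn–Banach separation
shows that `z` lies in the norm-closed convex hull of every tail of the sequence. Approximating `z`
by a convex combination of the whole sequence, and then by one of the tail beyond the indices used,
gives two convex combinations within `ε` of each other. -/

/-- A Banach space is reflexive if the canonical inclusion into its double dual is onto. -/
def IsReflexiveSpace (X : Type*) [NormedAddCommGroup X] [NormedSpace ℝ X] : Prop :=
  Function.Surjective (NormedSpace.inclusionInDoubleDual ℝ X)

open NormedSpace Filter Set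

theorem exists_fin_sum_eq_of_mem_convexHull_range {R E : Type*} [Field R] [LinearOrder R]
    [IsStrictOrderedRing R] [AddCommGroup E] [Module R E] {v : ℕ → E} {y : E}
    (hy : y ∈ convexHull R (range v)) :
    ∃ (N : ℕ) (w : Fin N → R), (∀ j, 0 ≤ w j) ∧ ∑ j, w j = 1 ∧ ∑ j, w j • v j = y := by
  rw [convexHull_range_eq_exists_affineCombination] at hy
  obtain ⟨s, w, hw₀, hw₁, rfl⟩ := hy
  obtain ⟨N, hsN⟩ := s.exists_nat_subset_range
  refine ⟨N, fun j => (s : Set ℕ).indicator w j, fun j => indicator_nonneg hw₀ _, ?_, ?_⟩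
  · rw [Fin.sum_univ_eq_sum_range ((s : Set ℕ).indicator w), Finset.sum_indicator_subset _ hsN,
      hw₁]
  · simp_rw [← indicator_smul_apply_left]
    rw [Fin.sum_univ_eq_sum_range ((s : Set ℕ).indicator fun j => w j • v j),
      Finset.sum_indicator_subset _ hsN, s.affineCombination_eq_linear_combination v w hw₁]

section Bidual

variable {X : Type*} [NormedAddCommGroup X] [NormedSpace ℝ X]

noncomputable abbrev toWeakDualBidual (x : X) : WeakDual ℝ (StrongDual ℝ X) :=
  inclusionInDoubleDual ℝ X x

theorem mem_closure_convexHull_of_toWeakDualBidual_mem_closure {s : Set X} {z : X}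
    (hz : toWeakDualBidual z ∈ closure (toWeakDualBidual '' s)) :
    z ∈ closure (convexHull ℝ s) := by
  by_contra hzs
  obtain ⟨f, c, hfs, hfz⟩ := geometric_hahn_banach_closed_point
    (convex_convexHull ℝ s).closure isClosed_closure hzs
  have hclosed : IsClosed {G : WeakDual ℝ (StrongDual ℝ X) | G f ≤ c} :=
    isClosed_le (WeakDual.eval_continuous f) continuous_const
  have himage : toWeakDualBidual '' s ⊆ {G : WeakDual ℝ (StrongDual ℝ X) | G f ≤ c} := by
    rintro - ⟨x, hx, rfl⟩
    exact (hfs x (subset_closure (subset_convexHull ℝ s hx))).le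
  exact (closure_minimal himage hclosed hz).not_gt hfz

theorem exists_mapClusterPt_toWeakDualBidual {ι : Type*} {l : Filter ι} [l.NeBot] {x : ι → X}
    {C : ℝ} (hx : ∀ i, ‖x i‖ ≤ C) :
    ∃ F, MapClusterPt F l (fun i => toWeakDualBidual (x i)) := by
  have hball : ∀ i, toWeakDualBidual (x i) ∈ WeakDual.toStrongDual ⁻¹' Metric.closedBall 0 C :=
    fun i => (dist_zero_right (inclusionInDoubleDual ℝ X (x i))).trans_le
      ((double_dual_bound ℝ X (x i)).trans (hx i))
  obtain ⟨F, -, hF⟩ := (WeakDual.isCompact_closedBall (𝕜 := ℝ) 0 C).exists_mapClusterPt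
    (f := l) (tendsto_principal.2 (.of_forall hball))
  exact ⟨F, hF⟩

theorem IsReflexiveSpace.exists_mem_closure_convexHull_tails (hX : IsReflexiveSpace X)
    {x : ℕ → X} {C : ℝ} (hx : ∀ i, ‖x i‖ ≤ C) :
    ∃ z, ∀ n, z ∈ closure (convexHull ℝ (range fun j => x (n + j))) := by
  obtain ⟨F, hF⟩ := exists_mapClusterPt_toWeakDualBidual (l := atTop) hx
  obtain ⟨z, rfl⟩ := hX (WeakDual.toStrongDual F)
  refine ⟨z, fun n => mem_closure_convexHull_of_toWeakDualBidual_mem_closure ?_⟩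
  simpa only [add_comm n, range_add_eq_image_Ici, image_image] using
    mapClusterPt_atTop_iff_forall_mem_closure.1 hF n

end Bidual

theorem reflexive_convex_combinations_close_general
    (X : Type*) [NormedAddCommGroup X] [NormedSpace ℝ X]
    (hrefl : IsReflexiveSpace X) :
    ∀ ε : ℝ, 0 < ε → ∀ x : ℕ → X, (∀ i, ‖x i‖ ≤ 1) →
      ∃ (k r : ℕ) (a : Fin k → ℝ) (b : Fin r → ℝ),
        (∀ i, 0 ≤ a i) ∧ (∑ i, a i) = 1 ∧
        (∀ j, 0 ≤ b j) ∧ (∑ j, b j) = 1 ∧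
        ‖(∑ i : Fin k, a i • x i) - ∑ j : Fin r, b j • x (k + j)‖ < ε := by
  intro ε hε x hx
  obtain ⟨z, hz⟩ := hrefl.exists_mem_closure_convexHull_tails hx
  obtain ⟨y₁, hy₁, hzy₁⟩ := Metric.mem_closure_iff.1 (hz 0) (ε / 2) (half_pos hε)
  obtain ⟨k, a, ha₀, ha₁, rfl⟩ := exists_fin_sum_eq_of_mem_convexHull_range hy₁
  obtain ⟨y₂, hy₂, hzy₂⟩ := Metric.mem_closure_iff.1 (hz k) (ε / 2) (half_pos hε)
  obtain ⟨r, b, hb₀, hb₁, rfl⟩ := exists_fin_sum_eq_of_mem_convexHull_range hy₂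
  refine ⟨k, r, a, b, ha₀, ha₁, hb₀, hb₁, ?_⟩
  simp only [zero_add] at hzy₁
  rw [← dist_eq_norm]
  calc _ ≤ dist z _ + dist z _ := dist_triangle_left _ _ z
    _ < ε / 2 + ε / 2 := add_lt_add hzy₁ hzy₂
    _ = ε := add_halves ε

theorem reflexive_convex_combinations_close
    (X : Type*) [NormedAddCommGroup X] [NormedSpace ℝ X] [CompleteSpace X]
    (hrefl : IsReflexiveSpace X) :
    ∀ ε : ℝ, 0 < ε → ∀ x : ℕ → X, (∀ i, ‖x i‖ ≤ 1) →
      ∃ (k r : ℕ) (a : Fin k → ℝ) (b : Fin r → ℝ),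
        (∀ i, 0 ≤ a i) ∧ (∑ i, a i) = 1 ∧
        (∀ j, 0 ≤ b j) ∧ (∑ j, b j) = 1 ∧
        ‖(∑ i : Fin k, a i • x i) - ∑ j : Fin r, b j • x (k + j)‖ < ε :=
  reflexive_convex_combinations_close_general X hrefl
end

section
/- If a Banach space X is not reflexive, then there exist ε > 0 and a sequence (xᵢ) in the closed unit ball of X such that for every k, the distance between conv{x₁,…,x_k} and conv{x_{k+1}, x_{k+2}, …} is at least ε. -/
open Metric NormedSpace

section

variable {E : Type*} [NormedAddCommGroup E] [NormedSpace ℝ E]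

theorem Submodule.exists_strongDual_eq_one_of_notMem {S : Submodule ℝ E}
    (hS : IsClosed (S : Set E)) {c : E} (hc : c ∉ S) :
    ∃ ψ : StrongDual ℝ E, (∀ s ∈ S, ψ s = 0) ∧ ψ c = 1 := by
  -- makes `E ⧸ S` a normed space
  have : IsClosed (S : Set E) := hS
  obtain ⟨φ, hφ⟩ := SeparatingDual.exists_eq_one (R := ℝ) (x := S.mkQ c)
    (by rwa [ne_eq, Submodule.mkQ_apply, Submodule.Quotient.mk_eq_zero])
  exact ⟨φ.comp S.mkQL, fun s hs => by simp [(Submodule.Quotient.mk_eq_zero S).2 hs], hφ⟩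

theorem ContinuousLinearMap.mul_norm_le_of_forall_mem_ball_apply_lt (g : StrongDual ℝ E)
    {r K : ℝ} (hr : 0 < r) (h : ∀ x ∈ ball (0 : E) r, g x < K) : r * ‖g‖ ≤ K := by
  by_contra! hK
  obtain ⟨y, hy, hKy⟩ := g.exists_lt_apply_of_lt_opNorm ((div_lt_iff₀' hr).2 hK)
  have hry : ‖r • y‖ < r := by
    rw [norm_smul, Real.norm_of_nonneg hr.le]
    exact mul_lt_of_lt_one_right hr hy
  have h₁ := h (r • y) (mem_ball_zero_iff.2 hry)
  have h₂ := h (-(r • y)) (mem_ball_zero_iff.2 (by rwa [norm_neg]))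
  rw [map_smul, smul_eq_mul] at h₁
  rw [map_neg, map_smul, smul_eq_mul] at h₂
  rw [Real.norm_eq_abs, div_lt_iff₀' hr] at hKy
  cases abs_cases (g y) <;> nlinarith

theorem ContinuousLinearMap.mem_image_ball_of_abs_apply_le {F : Type*} [NormedAddCommGroup F]
    [NormedSpace ℝ F] [FiniteDimensional ℝ F] (T : E →L[ℝ] F) {c : F} {M r : ℝ} (hM : 0 ≤ M)
    (hr : M < r) (hc : ∀ ψ : StrongDual ℝ F, |ψ c| ≤ M * ‖ψ.comp T‖) : c ∈ T '' ball 0 r := by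
  set R := LinearMap.range (T : E →ₗ[ℝ] F)
  have hcR : c ∈ R := by
    by_contra hcR
    obtain ⟨ψ, hψR, hψc⟩ := R.exists_strongDual_eq_one_of_notMem R.closed_of_finiteDimensional hcR
    have hψT : ψ.comp T = 0 := by
      ext x
      exact hψR _ (LinearMap.mem_range_self (T : E →ₗ[ℝ] F) x)
    exact absurd (hc ψ) (by simp [hψT, hψc])
  set T' : E →L[ℝ] R := T.codRestrict R (LinearMap.mem_range_self (T : E →ₗ[ℝ] F))
  have hT' : Function.Surjective T' := by
    rintro ⟨_, x, rfl⟩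
    exact ⟨x, rfl⟩
  by_contra hc'
  have hcU : (⟨c, hcR⟩ : R) ∉ T' '' ball 0 r := by
    rintro ⟨x, hx, hTx⟩
    exact hc' ⟨x, hx, congrArg Subtype.val hTx⟩
  -- separate inside `R`, where the image of the ball is open, then extend to `F`
  obtain ⟨φ, hφ⟩ := geometric_hahn_banach_open_point
    ((convex_ball 0 r).linear_image (T' : E →ₗ[ℝ] R))
    ((T' : E →ₗ[ℝ] R).isOpenMap_of_finiteDimensional hT' _ isOpen_ball) hcU
  obtain ⟨ψ, hψφ, -⟩ := exists_extension_norm_eq R φ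
  have hlt : ∀ x ∈ ball (0 : E) r, ψ.comp T x < ψ c := fun x hx =>
    (hψφ (T' x)).trans_lt ((hφ _ ⟨x, hx, rfl⟩).trans_eq (hψφ _).symm)
  have hr₀ : 0 < r := hM.trans_lt hr
  have hpos : 0 < ψ c := by simpa using hlt 0 (mem_ball_self hr₀)
  have hle := (ψ.comp T).mul_norm_le_of_forall_mem_ball_apply_lt hr₀ hlt
  have hψT : 0 < ‖ψ.comp T‖ := by
    by_contra! h
    linarith [(le_abs_self _).trans (hc ψ), mul_nonpos_of_nonneg_of_nonpos hM h]
  linarith [mul_lt_mul_of_pos_right hr hψT, (le_abs_self _).trans (hc ψ)]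

theorem exists_norm_lt_and_forall_apply_eq {ι : Type*} [Fintype ι] (f : ι → StrongDual ℝ E)
    (c : ι → ℝ) {M r : ℝ} (hM : 0 ≤ M) (hr : M < r)
    (hc : ∀ a : ι → ℝ, |∑ i, a i * c i| ≤ M * ‖∑ i, a i • f i‖) :
    ∃ x : E, ‖x‖ < r ∧ ∀ i, f i x = c i := by
  classical
  let T : E →L[ℝ] (ι → ℝ) := ContinuousLinearMap.pi f
  have hψ (ψ : StrongDual ℝ (ι → ℝ)) (v : ι → ℝ) : ψ v = ∑ i, v i * ψ (Pi.single i 1) := by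
    conv_lhs => rw [← Finset.univ_sum_single v]
    refine (map_sum ψ _ _).trans (Finset.sum_congr rfl fun i _ => ?_)
    rw [← smul_eq_mul, ← map_smul, ← Pi.single_smul', smul_eq_mul, mul_one]
  have hT (ψ : StrongDual ℝ (ι → ℝ)) : ψ.comp T = ∑ i, ψ (Pi.single i 1) • f i := by
    ext x
    rw [ContinuousLinearMap.comp_apply, hψ ψ (T x)]
    simp [T, mul_comm]
  obtain ⟨x, hx, hTx⟩ := T.mem_image_ball_of_abs_apply_le (c := c) hM hr fun ψ => by
    simpa only [hψ ψ c, hT, mul_comm] using hc fun i => ψ (Pi.single i 1)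
  exact ⟨x, mem_ball_zero_iff.1 hx, congrFun hTx⟩

theorem exists_norm_lt_forall_mem_apply_eq_of_doubleDual (G : StrongDual ℝ (StrongDual ℝ E))
    {r : ℝ} (hr : ‖G‖ < r) (s : Finset (StrongDual ℝ E)) :
    ∃ x : E, ‖x‖ < r ∧ ∀ f ∈ s, f x = G f := by
  obtain ⟨x, hx, hfx⟩ := exists_norm_lt_and_forall_apply_eq (fun f : s => (f : StrongDual ℝ E))
    (fun f => G f) (norm_nonneg G) hr fun a => by
      rw [← Real.norm_eq_abs]
      simpa [map_sum, mul_comm] using G.le_opNorm (∑ f, a f • (f : StrongDual ℝ E))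
  exact ⟨x, hx, fun f hf => hfx ⟨f, hf⟩⟩

theorem abs_mul_le_norm_smul_add_apply {V W 𝓕 : Type*} [NormedAddCommGroup V] [NormedSpace ℝ V]
    [AddCommGroup W] [Module ℝ W] [FunLike 𝓕 W V] [LinearMapClass 𝓕 ℝ W V] (T : 𝓕) {v : V}
    {d : ℝ} (hd : ∀ w, d ≤ ‖v - T w‖) (a : ℝ) (w : W) : |a| * d ≤ ‖a • v + T w‖ := by
  rcases eq_or_ne a 0 with rfl | ha
  · simp
  calc |a| * d ≤ |a| * ‖v - T (-a⁻¹ • w)‖ := mul_le_mul_of_nonneg_left (hd _) (abs_nonneg a)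
    _ = ‖a • v + T w‖ := by
      rw [← Real.norm_eq_abs, ← norm_smul, smul_sub, map_smul, smul_smul, mul_neg,
        mul_inv_cancel₀ ha, neg_smul, one_smul, sub_neg_eq_add]

theorem exists_strongDual_forall_mem_eq_zero {F : StrongDual ℝ (StrongDual ℝ E)} {d : ℝ}
    (hd₀ : 0 ≤ d) (hd : ∀ x, d ≤ ‖F - inclusionInDoubleDual ℝ E x‖) (s : Finset E) :
    ∃ g : StrongDual ℝ E, ‖g‖ < 1 ∧ F g = d / 2 ∧ ∀ x ∈ s, g x = 0 := by
  obtain ⟨g, hg, hgs⟩ := exists_norm_lt_and_forall_apply_eq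
    (Option.elim · F fun x : s => inclusionInDoubleDual ℝ E x)
    (Option.elim · (d / 2) fun _ => 0) (M := 1 / 2) (r := 1) (by norm_num) (by norm_num) fun a => by
      have := abs_mul_le_norm_smul_add_apply (inclusionInDoubleDual ℝ E) hd (a none)
        (∑ x : s, a (some x) • (x : E))
      simp only [Fintype.sum_option, Option.elim, mul_zero, Finset.sum_const_zero, add_zero,
        map_sum, map_smul] at this ⊢
      rw [abs_mul, abs_of_nonneg (by positivity : 0 ≤ d / 2)]
      linarith
  exact ⟨g, hg, hgs none, fun x hx => hgs (some ⟨x, hx⟩)⟩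

theorem norm_inv_norm_add_one_smul_lt_one (v : E) : ‖(‖v‖ + 1)⁻¹ • v‖ < 1 := by
  rw [norm_smul, norm_inv, Real.norm_of_nonneg (by positivity), inv_mul_lt_iff₀ (by positivity)]
  linarith

theorem abs_sub_le_norm_sub_of_mem_convexHull {f : StrongDual ℝ E} (hf : ‖f‖ ≤ 1) {A B : Set E}
    {a b : ℝ} (hA : A ⊆ f ⁻¹' {a}) (hB : B ⊆ f ⁻¹' {b}) {u v : E}
    (hu : u ∈ convexHull ℝ A) (hv : v ∈ convexHull ℝ B) : |a - b| ≤ ‖u - v‖ := by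
  have hfu : f u = a := convexHull_min hA ((convex_singleton a).linear_preimage f.toLinearMap) hu
  have hfv : f v = b := convexHull_min hB ((convex_singleton b).linear_preimage f.toLinearMap) hv
  calc |a - b| = ‖f (u - v)‖ := by rw [map_sub, hfu, hfv, Real.norm_eq_abs]
    _ ≤ ‖f‖ * ‖u - v‖ := f.le_opNorm _
    _ ≤ ‖u - v‖ := mul_le_of_le_one_left (norm_nonneg _) hf

def IsJamesSystem (θ : ℝ) (f : ℕ → StrongDual ℝ E) (x : ℕ → E) : Prop :=
  (∀ n, ‖f n‖ ≤ 1 ∧ ‖x n‖ ≤ 1) ∧ (∀ m n, m < n → f n (x m) = 0) ∧ ∀ m n, m ≤ n → f m (x n) = θ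

theorem IsJamesSystem.le_norm_sub {θ : ℝ} {f : ℕ → StrongDual ℝ E} {x : ℕ → E}
    (h : IsJamesSystem θ f x) (k : ℕ) {u v : E} (hu : u ∈ convexHull ℝ (x '' {i | i < k}))
    (hv : v ∈ convexHull ℝ (x '' {i | k ≤ i})) : |θ| ≤ ‖u - v‖ := by
  have := abs_sub_le_norm_sub_of_mem_convexHull (h.1 k).1
    (by rintro _ ⟨i, hi, rfl⟩; exact h.2.1 i k hi) (by rintro _ ⟨i, hi, rfl⟩; exact h.2.2 k i hi)
    hu hv
  rwa [zero_sub, abs_neg] at this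

theorem exists_isJamesSystem {F : StrongDual ℝ (StrongDual ℝ E)} (hF : ‖F‖ < 1) {d : ℝ}
    (hd₀ : 0 ≤ d) (hd : ∀ x, d ≤ ‖F - inclusionInDoubleDual ℝ E x‖) :
    ∃ (f : ℕ → StrongDual ℝ E) (x : ℕ → E), IsJamesSystem (d / 2) f x := by
  classical
  let P : StrongDual ℝ E × E → Prop := fun q =>
    ‖q.1‖ ≤ 1 ∧ ‖q.2‖ ≤ 1 ∧ F q.1 = d / 2 ∧ q.1 q.2 = d / 2
  let R : StrongDual ℝ E × E → StrongDual ℝ E × E → Prop := fun p q =>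
    q.1 p.2 = 0 ∧ p.1 q.2 = d / 2
  have step (s : Finset (StrongDual ℝ E × E)) (hs : ∀ p ∈ s, P p) : ∃ q, P q ∧ ∀ p ∈ s, R p q := by
    obtain ⟨g, hg, hgF, hgs⟩ := exists_strongDual_forall_mem_eq_zero hd₀ hd (s.image Prod.snd)
    obtain ⟨y, hy, hys⟩ :=
      exists_norm_lt_forall_mem_apply_eq_of_doubleDual F hF (insert g (s.image Prod.fst))
    refine ⟨(g, y), ⟨hg.le, hy.le, hgF, ?_⟩, fun p hp => ⟨?_, ?_⟩⟩
    · rw [← hgF]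
      exact hys g (Finset.mem_insert_self _ _)
    · exact hgs _ (Finset.mem_image_of_mem _ hp)
    · rw [← (hs p hp).2.2.1]
      exact hys _ (Finset.mem_insert_of_mem (Finset.mem_image_of_mem _ hp))
  obtain ⟨q, hP, hR⟩ := exists_seq_of_forall_finset_exists P R step
  refine ⟨fun n => (q n).1, fun n => (q n).2, fun n => ⟨(hP n).1, (hP n).2.1⟩,
    fun m n hmn => (hR m n hmn).1, fun m n hmn => ?_⟩
  rcases hmn.lt_or_eq with hmn | rfl
  · exact (hR m n hmn).2
  · exact (hP m).2.2.2

end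

theorem nonreflexive_separated_convex_hulls
    (X : Type*) [NormedAddCommGroup X] [NormedSpace ℝ X] [CompleteSpace X]
    (hrefl : ¬ IsReflexiveSpace X) :
    ∃ ε : ℝ, 0 < ε ∧ ∃ x : ℕ → X, (∀ i, ‖x i‖ ≤ 1) ∧
      ∀ k : ℕ, ∀ u ∈ convexHull ℝ (x '' {i | i < k}),
        ∀ v ∈ convexHull ℝ (x '' {i | k ≤ i}), ε ≤ ‖u - v‖ := by
  set J := inclusionInDoubleDual ℝ X
  have hJ : IsClosed (Set.range J) :=
    (show Isometry J from (inclusionInDoubleDualLi ℝ).isometry).isClosedEmbedding.isClosed_range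
  obtain ⟨F₀, hF₀⟩ : ∃ F₀, F₀ ∉ Set.range J := by
    simpa [IsReflexiveSpace, Function.Surjective] using hrefl
  set F := (‖F₀‖ + 1)⁻¹ • F₀
  have hF : ‖F‖ < 1 := norm_inv_norm_add_one_smul_lt_one F₀
  have hFJ : F ∉ Set.range J := by
    rintro ⟨y, hy⟩
    exact hF₀ ⟨(‖F₀‖ + 1) • y, by rw [map_smul, hy, smul_inv_smul₀ (by positivity)]⟩
  set d := infDist F (Set.range J)
  have hd : 0 < d := (hJ.notMem_iff_infDist_pos (Set.range_nonempty J)).1 hFJ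
  obtain ⟨f, x, hfx⟩ := exists_isJamesSystem hF hd.le fun y =>
    (infDist_le_dist_of_mem (Set.mem_range_self y)).trans_eq (dist_eq_norm F (J y))
  refine ⟨d / 2, half_pos hd, x, fun n => (hfx.1 n).2, fun k u hu v hv => ?_⟩
  simpa [abs_of_pos (half_pos hd)] using hfx.le_norm_sub k hu hv
end

section
/- Let E be a Banach space with dim E > 2. Then E does not admit simultaneously a nontrivial L^1-projection and a nontrivial L^∞-projection (nontrivial meaning neither equal to 0 nor to the identity). -/
private lemma max_abs_eq (s t : ℝ) : max |s| |t| = (|s + t| + |s - t|) / 2 := by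
  rcases abs_cases s with ⟨hs, hs'⟩ | ⟨hs, hs'⟩ <;>
    rcases abs_cases t with ⟨ht, ht'⟩ | ⟨ht, ht'⟩ <;>
    rcases abs_cases (s + t) with ⟨h1, h1'⟩ | ⟨h1, h1'⟩ <;>
    rcases abs_cases (s - t) with ⟨h2, h2'⟩ | ⟨h2, h2'⟩ <;>
    rcases max_cases |s| |t| with ⟨h3, h3'⟩ | ⟨h3, h3'⟩ <;>
    linarith

private lemma rigidity {E : Type*} [NormedAddCommGroup E] [NormedSpace ℝ E]
    (P Q : E →ₗ[ℝ] E)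
    (hP : ∀ x : E, ‖P x‖ + ‖x - P x‖ = ‖x‖)
    (hQ : ∀ x : E, max ‖Q x‖ ‖x - Q x‖ = ‖x‖)
    {u v : E} (hu : Q u = u) (hv : Q v = 0) (nu : ‖u‖ = 1) (nv : ‖v‖ = 1)
    (s t : ℝ) :
    ‖P (s • u + t • v)‖
      = ‖P (u + v)‖ / 2 * |s + t| + ‖P (u - v)‖ / 2 * |s - t| := by
  have normcomb : ∀ s t : ℝ, ‖s • u + t • v‖ = max |s| |t| := by
    intro s t
    have hz : Q (s • u + t • v) = s • u := by
      simp [map_add, map_smul, hu, hv]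
    have h := hQ (s • u + t • v)
    rw [hz] at h
    have h2 : s • u + t • v - s • u = t • v := by abel
    rw [h2, norm_smul, norm_smul, nu, nv, Real.norm_eq_abs, Real.norm_eq_abs] at h
    simpa using h.symm
  have hdec : s • u + t • v
      = ((s + t) / 2) • (u + v) + ((s - t) / 2) • (u - v) := by
    match_scalars <;> ring
  have hPz : P (s • u + t • v)
      = ((s + t) / 2) • P (u + v) + ((s - t) / 2) • P (u - v) := by
    rw [hdec]; simp [map_add, map_smul]
  have hCz : (s • u + t • v) - P (s • u + t • v)
      = ((s + t) / 2) • ((u + v) - P (u + v)) + ((s - t) / 2) • ((u - v) - P (u - v)) := by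
    rw [hPz]
    nth_rewrite 1 [hdec]
    match_scalars <;> ring
  have ub1 : ‖P (s • u + t • v)‖
      ≤ |s + t| / 2 * ‖P (u + v)‖ + |s - t| / 2 * ‖P (u - v)‖ := by
    rw [hPz]
    refine (norm_add_le _ _).trans ?_
    rw [norm_smul, norm_smul, Real.norm_eq_abs, Real.norm_eq_abs, abs_div, abs_div]
    simp [abs_two]
  have ub2 : ‖(s • u + t • v) - P (s • u + t • v)‖
      ≤ |s + t| / 2 * ‖(u + v) - P (u + v)‖ + |s - t| / 2 * ‖(u - v) - P (u - v)‖ := by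
    rw [hCz]
    refine (norm_add_le _ _).trans ?_
    rw [norm_smul, norm_smul, Real.norm_eq_abs, Real.norm_eq_abs, abs_div, abs_div]
    simp [abs_two]
  have sum0 : ‖P (s • u + t • v)‖ + ‖(s • u + t • v) - P (s • u + t • v)‖
      = (|s + t| + |s - t|) / 2 := by
    rw [hP (s • u + t • v), normcomb, max_abs_eq]
  have sum1 : ‖P (u + v)‖ + ‖(u + v) - P (u + v)‖ = 1 := by
    have := normcomb 1 1
    simp at this
    rw [hP (u + v), this]
  have sum2 : ‖P (u - v)‖ + ‖(u - v) - P (u - v)‖ = 1 := by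
    have := normcomb 1 (-1)
    have e : (1 : ℝ) • u + (-1 : ℝ) • v = u - v := by match_scalars <;> ring
    rw [e] at this
    simp at this
    rw [hP (u - v), this]
  have hAB : |s + t| / 2 * ‖P (u + v)‖ + |s - t| / 2 * ‖P (u - v)‖
      + (|s + t| / 2 * ‖(u + v) - P (u + v)‖ + |s - t| / 2 * ‖(u - v) - P (u - v)‖)
      = (|s + t| + |s - t|) / 2 := by
    linear_combination (|s + t| / 2) * sum1 + (|s - t| / 2) * sum2
  linarith [ub1, ub2, sum0, hAB]

set_option maxHeartbeats 2000000 in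
private lemma key {E : Type*} [NormedAddCommGroup E] [NormedSpace ℝ E]
    (P Q : E →ₗ[ℝ] E)
    (hQproj : ∀ x : E, Q (Q x) = Q x)
    (hP : ∀ x : E, ‖P x‖ + ‖x - P x‖ = ‖x‖)
    (hQ : ∀ x : E, max ‖Q x‖ ‖x - Q x‖ = ‖x‖)
    (hY : ∃ y : E, P y = 0 ∧ y ≠ 0)
    (hU : ∃ u : E, Q u = u ∧ u ≠ 0)
    (hV : ∃ v : E, Q v = 0 ∧ v ≠ 0)
    (x₁ x₂ : E) (hx₁ : P x₁ = x₁) (hx₂ : P x₂ = x₂)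
    (n₁ : ‖x₁‖ = 1) (n₂ : ‖x₂‖ = 1)
    (hsum : x₁ + x₂ ≠ 0) (hdif : x₁ - x₂ ≠ 0) : False := by
  -- normalized vectors in U and V
  obtain ⟨u₀, hu₀, u₀ne⟩ := hU
  obtain ⟨v₀, hv₀, v₀ne⟩ := hV
  set ub : E := ‖u₀‖⁻¹ • u₀ with hub_def
  set vb : E := ‖v₀‖⁻¹ • v₀ with hvb_def
  have hub : Q ub = ub := by rw [hub_def, map_smul, hu₀]
  have hvb : Q vb = 0 := by rw [hvb_def, map_smul, hv₀, smul_zero]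
  have nub : ‖ub‖ = 1 := norm_smul_inv_norm u₀ne
  have nvb : ‖vb‖ = 1 := norm_smul_inv_norm v₀ne
  set lam : ℝ := ‖P vb‖ with hlam_def
  -- from rigidity at (1,0) and (0,1): for unit u in U, v in V, ‖Pu‖ = ‖Pv‖
  have base : ∀ u v : E, Q u = u → Q v = 0 → ‖u‖ = 1 → ‖v‖ = 1 → ‖P u‖ = ‖P v‖ := by
    intro u v hu hv nu nv
    have h10 := rigidity P Q hP hQ hu hv nu nv 1 0
    have h01 := rigidity P Q hP hQ hu hv nu nv 0 1
    simp only [one_smul, zero_smul, add_zero, zero_add] at h10 h01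
    rw [h10, h01]
    norm_num
  -- ‖P u‖ = lam * ‖u‖ for all u in U
  have normPu : ∀ u : E, Q u = u → ‖P u‖ = lam * ‖u‖ := by
    intro u hu
    by_cases h : u = 0
    · simp [h]
    · have hu' : Q (‖u‖⁻¹ • u) = ‖u‖⁻¹ • u := by rw [map_smul, hu]
      have := base (‖u‖⁻¹ • u) vb hu' hvb (norm_smul_inv_norm h) nvb
      rw [map_smul, norm_smul, Real.norm_eq_abs, abs_inv, abs_norm] at this
      have hn : ‖u‖ ≠ 0 := norm_ne_zero_iff.mpr h
      rw [hlam_def]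
      field_simp at this
      linarith [this]
  -- ‖P v‖ = lam * ‖v‖ for all v in V
  have normPv : ∀ v : E, Q v = 0 → ‖P v‖ = lam * ‖v‖ := by
    intro v hv
    by_cases h : v = 0
    · simp [h]
    · have hv' : Q (‖v‖⁻¹ • v) = 0 := by rw [map_smul, hv, smul_zero]
      have := (base ub (‖v‖⁻¹ • v) hub hv' nub (norm_smul_inv_norm h)).symm
      rw [map_smul, norm_smul, Real.norm_eq_abs, abs_inv, abs_norm] at this
      have hlamub : ‖P ub‖ = lam := by rw [normPu ub hub, nub, mul_one]
      rw [hlamub] at this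
      have hn : ‖v‖ ≠ 0 := norm_ne_zero_iff.mpr h
      rw [hlam_def]
      field_simp at this
      linarith [this]
  have lam_nonneg : 0 ≤ lam := norm_nonneg _
  have lam_le_one : lam ≤ 1 := by
    have := hP vb
    rw [nvb] at this
    have := norm_nonneg (vb - P vb)
    linarith
  -- complements
  have normCu : ∀ u : E, Q u = u → ‖u - P u‖ = (1 - lam) * ‖u‖ := by
    intro u hu
    have h1 := hP u
    rw [normPu u hu] at h1
    linarith
  have normCv : ∀ v : E, Q v = 0 → ‖v - P v‖ = (1 - lam) * ‖v‖ := by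
    intro v hv
    have h1 := hP v
    rw [normPv v hv] at h1
    linarith
  have hQle : ∀ z : E, ‖Q z‖ ≤ ‖z‖ ∧ ‖z - Q z‖ ≤ ‖z‖ := by
    intro z
    constructor
    · rw [← hQ z]; exact le_max_left _ _
    · rw [← hQ z]; exact le_max_right _ _
  -- lam = 1/2
  have lam_eq : lam = 1 / 2 := by
    obtain ⟨y, hy, yne⟩ := hY
    have hyQ : Q (Q y) = Q y := hQproj y
    have hyQ' : Q (y - Q y) = 0 := by rw [map_sub, hQproj]; abel
    have hdecy : y - P y = (Q y - P (Q y)) + ((y - Q y) - P (y - Q y)) := by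
      rw [map_sub]; abel
    have hb1 : ‖y - P y‖ ≤ (1 - lam) * ‖Q y‖ + (1 - lam) * ‖y - Q y‖ := by
      rw [hdecy]
      refine (norm_add_le _ _).trans ?_
      rw [normCu (Q y) hyQ, normCv (y - Q y) hyQ']
    have hb2 : ‖y - P y‖ = ‖y‖ := by rw [hy, sub_zero]
    have hypos : 0 < ‖y‖ := norm_pos_iff.mpr yne
    have h3 := (hQle y).1
    have h4 := (hQle y).2
    have hle : lam ≤ 1 / 2 := by nlinarith
    -- lower bound using x₁
    have hx1Q : Q (Q x₁) = Q x₁ := hQproj x₁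
    have hx1Q' : Q (x₁ - Q x₁) = 0 := by rw [map_sub, hQproj]; abel
    have hdecx : P x₁ = P (Q x₁) + P (x₁ - Q x₁) := by rw [map_sub]; abel
    have hb3 : ‖P x₁‖ ≤ lam * ‖Q x₁‖ + lam * ‖x₁ - Q x₁‖ := by
      rw [hdecx]
      refine (norm_add_le _ _).trans ?_
      rw [normPu (Q x₁) hx1Q, normPv (x₁ - Q x₁) hx1Q']
    have h5 := (hQle x₁).1
    have h6 := (hQle x₁).2
    rw [hx₁, n₁] at hb3
    rw [n₁] at h5 h6
    have hge : 1 / 2 ≤ lam := by nlinarith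
    linarith
  -- L4
  have L4 : ∀ x : E, P x = x → x ≠ 0 →
      P (Q x) = (2:ℝ)⁻¹ • x ∧ ‖Q x‖ = ‖x‖ ∧ ‖x - Q x‖ = ‖x‖ := by
    intro x hx xne
    have hxQ : Q (Q x) = Q x := hQproj x
    have hxQ' : Q (x - Q x) = 0 := by rw [map_sub, hQproj]; abel
    have hxpos : 0 < ‖x‖ := norm_pos_iff.mpr xne
    have h1 : ‖P (Q x)‖ = ‖Q x‖ / 2 := by rw [normPu (Q x) hxQ, lam_eq]; ring
    have h2 : ‖P (x - Q x)‖ = ‖x - Q x‖ / 2 := by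
      rw [normPv (x - Q x) hxQ', lam_eq]; ring
    have hdecx : P x = P (Q x) + P (x - Q x) := by rw [map_sub]; abel
    have hb : ‖x‖ ≤ ‖Q x‖ / 2 + ‖x - Q x‖ / 2 := by
      calc ‖x‖ = ‖P x‖ := by rw [hx]
        _ ≤ ‖P (Q x)‖ + ‖P (x - Q x)‖ := by rw [hdecx]; exact norm_add_le _ _
        _ = ‖Q x‖ / 2 + ‖x - Q x‖ / 2 := by rw [h1, h2]
    have h5 := (hQle x).1
    have h6 := (hQle x).2
    have nQx : ‖Q x‖ = ‖x‖ := by linarith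
    have nCx : ‖x - Q x‖ = ‖x‖ := by linarith
    refine ⟨?_, nQx, nCx⟩
    -- rigidity applied to normalized Qx and x - Qx
    have hQxne : ‖x‖ ≠ 0 := ne_of_gt hxpos
    have hu' : Q (‖x‖⁻¹ • Q x) = ‖x‖⁻¹ • Q x := by rw [map_smul, hxQ]
    have hv' : Q (‖x‖⁻¹ • (x - Q x)) = 0 := by rw [map_smul, hxQ', smul_zero]
    have nu' : ‖‖x‖⁻¹ • Q x‖ = 1 := by
      rw [norm_smul, Real.norm_eq_abs, abs_inv, abs_norm, nQx, inv_mul_cancel₀ hQxne]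
    have nv' : ‖‖x‖⁻¹ • (x - Q x)‖ = 1 := by
      rw [norm_smul, Real.norm_eq_abs, abs_inv, abs_norm, nCx, inv_mul_cancel₀ hQxne]
    have h10 := rigidity P Q hP hQ hu' hv' nu' nv' 1 0
    simp only [one_smul, zero_smul, add_zero] at h10
    have hsum' : ‖x‖⁻¹ • Q x + ‖x‖⁻¹ • (x - Q x) = ‖x‖⁻¹ • x := by
      rw [← smul_add]; congr 1; abel
    have hPsum : ‖P (‖x‖⁻¹ • Q x + ‖x‖⁻¹ • (x - Q x))‖ = 1 := by
      rw [hsum', map_smul, hx, norm_smul, Real.norm_eq_abs, abs_inv, abs_norm,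
        inv_mul_cancel₀ hQxne]
    have hPu' : ‖P (‖x‖⁻¹ • Q x)‖ = 1 / 2 := by
      rw [map_smul, norm_smul, Real.norm_eq_abs, abs_inv, abs_norm, h1, nQx]
      field_simp
    rw [hPsum, hPu'] at h10
    rw [abs_one, show |(1:ℝ) - 0| = 1 by norm_num, mul_one, mul_one] at h10
    have hdiff0 : ‖P (‖x‖⁻¹ • Q x - ‖x‖⁻¹ • (x - Q x))‖ = 0 := by linarith
    have hdiff : P (‖x‖⁻¹ • Q x - ‖x‖⁻¹ • (x - Q x)) = 0 := norm_eq_zero.mp hdiff0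
    have h10' : P (‖x‖⁻¹ • Q x - ‖x‖⁻¹ • (x - Q x))
        = ‖x‖⁻¹ • (P (Q x) - P (x - Q x)) := by
      rw [map_sub, map_smul, map_smul, smul_sub]
    rw [h10'] at hdiff
    have h7 : P (Q x) - P (x - Q x) = 0 := by
      rcases smul_eq_zero.mp hdiff with h | h
      · exact absurd h (inv_ne_zero hQxne)
      · exact h
    have h8 : P (x - Q x) = x - P (Q x) := by rw [map_sub, hx]
    rw [h8] at h7
    have h7' : P (Q x) = x - P (Q x) := sub_eq_zero.mp h7
    have h9 : (2:ℝ) • P (Q x) = x := by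
      rw [two_smul]
      nth_rewrite 1 [h7']
      abel
    have h9' := congrArg (fun z : E => (2:ℝ)⁻¹ • z) h9
    simp only [smul_smul] at h9'
    norm_num at h9'
    rw [h9']
    congr 1
    norm_num
  -- nonvanishing
  have x₁ne : x₁ ≠ 0 := by intro h; rw [h, norm_zero] at n₁; norm_num at n₁
  have x₂ne : x₂ ≠ 0 := by intro h; rw [h, norm_zero] at n₂; norm_num at n₂
  obtain ⟨hPQ1, nQ1, nC1⟩ := L4 x₁ hx₁ x₁ne
  obtain ⟨hPQ2, nQ2, nC2⟩ := L4 x₂ hx₂ x₂ne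
  -- Relation A : the norm on the plane spanned by x₁, x₂ is an explicit ℓ¹ norm
  have A : ∀ a b : ℝ, ‖a • x₁ + b • x₂‖
      = (‖x₁ + x₂‖ * |a + b| + ‖x₁ - x₂‖ * |a - b|) / 2 := by
    intro a b
    have hu : Q (Q x₁) = Q x₁ := hQproj x₁
    have hv : Q (x₂ - Q x₂) = 0 := by rw [map_sub, hQproj, sub_self]
    have nu : ‖Q x₁‖ = 1 := by rw [nQ1]; exact n₁
    have nv : ‖x₂ - Q x₂‖ = 1 := by rw [nC2]; exact n₂
    have h := rigidity P Q hP hQ hu hv nu nv (2*a) (2*b)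
    have hL : P ((2*a) • Q x₁ + (2*b) • (x₂ - Q x₂)) = a • x₁ + b • x₂ := by
      rw [map_add, map_smul, map_smul, map_sub, hPQ1, hPQ2, hx₂]
      match_scalars <;> ring
    have hc1 : P (Q x₁ + (x₂ - Q x₂)) = (2:ℝ)⁻¹ • (x₁ + x₂) := by
      rw [map_add, map_sub, hPQ1, hPQ2, hx₂]
      match_scalars <;> ring
    have hc2 : P (Q x₁ - (x₂ - Q x₂)) = (2:ℝ)⁻¹ • (x₁ - x₂) := by
      rw [map_sub, map_sub, hPQ1, hPQ2, hx₂]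
      match_scalars <;> ring
    rw [hL, hc1, hc2, norm_smul, norm_smul] at h
    rw [h, show (2*a + 2*b) = 2*(a+b) by ring, show (2*a - 2*b) = 2*(a-b) by ring,
      abs_mul, abs_mul, abs_two, Real.norm_eq_abs, abs_inv, abs_two]
    ring
  -- endgame
  have mppos : 0 < ‖x₁ + x₂‖ := norm_pos_iff.mpr hsum
  have mmpos : 0 < ‖x₁ - x₂‖ := norm_pos_iff.mpr hdif
  have hwp : P (x₁ + x₂) = x₁ + x₂ := by rw [map_add, hx₁, hx₂]
  have hwm : P (x₁ - x₂) = x₁ - x₂ := by rw [map_sub, hx₁, hx₂]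
  obtain ⟨hPQp, nQp, nCp⟩ := L4 (x₁ + x₂) hwp hsum
  obtain ⟨hPQm, nQm, nCm⟩ := L4 (x₁ - x₂) hwm hdif
  have hu' : Q (‖x₁ + x₂‖⁻¹ • Q (x₁ + x₂)) = ‖x₁ + x₂‖⁻¹ • Q (x₁ + x₂) := by
    rw [map_smul, hQproj]
  have hv' : Q (‖x₁ - x₂‖⁻¹ • ((x₁ - x₂) - Q (x₁ - x₂))) = 0 := by
    rw [map_smul, map_sub, hQproj, sub_self, smul_zero]
  have nu' : ‖‖x₁ + x₂‖⁻¹ • Q (x₁ + x₂)‖ = 1 := by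
    rw [norm_smul, Real.norm_eq_abs, abs_inv, abs_norm, nQp,
      inv_mul_cancel₀ mppos.ne']
  have nv' : ‖‖x₁ - x₂‖⁻¹ • ((x₁ - x₂) - Q (x₁ - x₂))‖ = 1 := by
    rw [norm_smul, Real.norm_eq_abs, abs_inv, abs_norm, nCm,
      inv_mul_cancel₀ mmpos.ne']
  have h10 := rigidity P Q hP hQ hu' hv' nu' nv' 1 0
  simp only [one_smul, zero_smul, add_zero] at h10
  -- compute the three norms appearing in h10 via relation A
  have hPu' : P (‖x₁ + x₂‖⁻¹ • Q (x₁ + x₂))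
      = (2 * ‖x₁ + x₂‖)⁻¹ • x₁ + (2 * ‖x₁ + x₂‖)⁻¹ • x₂ := by
    rw [map_smul, hPQp]
    match_scalars <;> ring
  have hPv' : P (‖x₁ - x₂‖⁻¹ • ((x₁ - x₂) - Q (x₁ - x₂)))
      = (2 * ‖x₁ - x₂‖)⁻¹ • x₁ + (-(2 * ‖x₁ - x₂‖)⁻¹) • x₂ := by
    rw [map_smul, map_sub, hwm, hPQm]
    match_scalars <;> ring
  have nPu' : ‖P (‖x₁ + x₂‖⁻¹ • Q (x₁ + x₂))‖ = 1/2 := by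
    rw [hPu', A]
    rw [sub_self, abs_zero, mul_zero, add_zero,
      show (2 * ‖x₁ + x₂‖)⁻¹ + (2 * ‖x₁ + x₂‖)⁻¹ = ‖x₁ + x₂‖⁻¹ by
        rw [mul_inv]; ring,
      abs_inv, abs_norm, mul_inv_cancel₀ mppos.ne']
  have nPsum : ‖P (‖x₁ + x₂‖⁻¹ • Q (x₁ + x₂) + ‖x₁ - x₂‖⁻¹ • ((x₁ - x₂) - Q (x₁ - x₂)))‖ = 1 := by
    rw [map_add, hPu', hPv']
    have e : (2 * ‖x₁ + x₂‖)⁻¹ • x₁ + (2 * ‖x₁ + x₂‖)⁻¹ • x₂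
        + ((2 * ‖x₁ - x₂‖)⁻¹ • x₁ + (-(2 * ‖x₁ - x₂‖)⁻¹) • x₂)
        = ((2 * ‖x₁ + x₂‖)⁻¹ + (2 * ‖x₁ - x₂‖)⁻¹) • x₁
          + ((2 * ‖x₁ + x₂‖)⁻¹ - (2 * ‖x₁ - x₂‖)⁻¹) • x₂ := by
      match_scalars <;> ring
    rw [e, A]
    rw [show ((2 * ‖x₁ + x₂‖)⁻¹ + (2 * ‖x₁ - x₂‖)⁻¹) + ((2 * ‖x₁ + x₂‖)⁻¹ - (2 * ‖x₁ - x₂‖)⁻¹)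
        = ‖x₁ + x₂‖⁻¹ by rw [mul_inv, mul_inv]; ring,
      show ((2 * ‖x₁ + x₂‖)⁻¹ + (2 * ‖x₁ - x₂‖)⁻¹) - ((2 * ‖x₁ + x₂‖)⁻¹ - (2 * ‖x₁ - x₂‖)⁻¹)
        = ‖x₁ - x₂‖⁻¹ by rw [mul_inv, mul_inv]; ring,
      abs_inv, abs_inv, abs_norm, abs_norm,
      mul_inv_cancel₀ mppos.ne', mul_inv_cancel₀ mmpos.ne']
    norm_num
  have nPdif : ‖P (‖x₁ + x₂‖⁻¹ • Q (x₁ + x₂) - ‖x₁ - x₂‖⁻¹ • ((x₁ - x₂) - Q (x₁ - x₂)))‖ = 1 := by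
    rw [map_sub, hPu', hPv']
    have e : (2 * ‖x₁ + x₂‖)⁻¹ • x₁ + (2 * ‖x₁ + x₂‖)⁻¹ • x₂
        - ((2 * ‖x₁ - x₂‖)⁻¹ • x₁ + (-(2 * ‖x₁ - x₂‖)⁻¹) • x₂)
        = ((2 * ‖x₁ + x₂‖)⁻¹ - (2 * ‖x₁ - x₂‖)⁻¹) • x₁
          + ((2 * ‖x₁ + x₂‖)⁻¹ + (2 * ‖x₁ - x₂‖)⁻¹) • x₂ := by
      match_scalars <;> ring
    rw [e, A]
    rw [show ((2 * ‖x₁ + x₂‖)⁻¹ - (2 * ‖x₁ - x₂‖)⁻¹) + ((2 * ‖x₁ + x₂‖)⁻¹ + (2 * ‖x₁ - x₂‖)⁻¹)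
        = ‖x₁ + x₂‖⁻¹ by rw [mul_inv, mul_inv]; ring,
      show ((2 * ‖x₁ + x₂‖)⁻¹ - (2 * ‖x₁ - x₂‖)⁻¹) - ((2 * ‖x₁ + x₂‖)⁻¹ + (2 * ‖x₁ - x₂‖)⁻¹)
        = -‖x₁ - x₂‖⁻¹ by rw [mul_inv, mul_inv]; ring,
      abs_neg, abs_inv, abs_inv, abs_norm, abs_norm,
      mul_inv_cancel₀ mppos.ne', mul_inv_cancel₀ mmpos.ne']
    norm_num
  rw [nPu', nPsum, nPdif] at h10
  norm_num at h10


theorem no_nontrivial_L1_and_Linfty_projections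
    {E : Type*} [NormedAddCommGroup E] [NormedSpace ℝ E] [CompleteSpace E]
    (hdim : 2 < Module.rank ℝ E)
    (P Q : E →ₗ[ℝ] E)
    (hPproj : ∀ x : E, P (P x) = P x)
    (hQproj : ∀ x : E, Q (Q x) = Q x)
    (hP : ∀ x : E, ‖P x‖ + ‖x - P x‖ = ‖x‖)
    (hQ : ∀ x : E, max ‖Q x‖ ‖x - Q x‖ = ‖x‖)
    (hPnt : P ≠ 0 ∧ P ≠ LinearMap.id)
    (hQnt : Q ≠ 0 ∧ Q ≠ LinearMap.id) :
    False := by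
  obtain ⟨hP0, hPid⟩ := hPnt
  obtain ⟨hQ0, hQid⟩ := hQnt
  have hX : ∃ x : E, P x = x ∧ x ≠ 0 := by
    by_contra h
    push_neg at h
    exact hP0 (LinearMap.ext fun z => by simpa using h (P z) (hPproj z))
  have hY : ∃ y : E, P y = 0 ∧ y ≠ 0 := by
    by_contra h
    push_neg at h
    refine hPid (LinearMap.ext fun z => ?_)
    have h2 := sub_eq_zero.mp (h (z - P z) (by rw [map_sub, hPproj, sub_self]))
    simpa using h2.symm
  have hU : ∃ u : E, Q u = u ∧ u ≠ 0 := by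
    by_contra h
    push_neg at h
    exact hQ0 (LinearMap.ext fun z => by simpa using h (Q z) (hQproj z))
  have hV : ∃ v : E, Q v = 0 ∧ v ≠ 0 := by
    by_contra h
    push_neg at h
    refine hQid (LinearMap.ext fun z => ?_)
    have h2 := sub_eq_zero.mp (h (z - Q z) (by rw [map_sub, hQproj, sub_self]))
    simpa using h2.symm
  by_cases hthin : ∃ a : E, ∀ x : E, P x = x → ∃ c : ℝ, x = c • a
  · by_cases hthin' : ∃ b : E, ∀ y : E, P y = 0 → ∃ c : ℝ, y = c • b
    · -- both ranges are at most one-dimensional: contradicts dim E > 2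
      obtain ⟨a, ha⟩ := hthin
      obtain ⟨b, hb⟩ := hthin'
      have hspan : Submodule.span ℝ ({a, b} : Set E) = ⊤ := by
        rw [Submodule.eq_top_iff']
        intro z
        obtain ⟨c, hc⟩ := ha (P z) (hPproj z)
        obtain ⟨d, hd⟩ := hb (z - P z) (by rw [map_sub, hPproj, sub_self])
        have hz : z = c • a + d • b := by rw [← hc, ← hd]; abel
        rw [hz]
        exact Submodule.add_mem _
          (Submodule.smul_mem _ _ (Submodule.subset_span (by simp)))
          (Submodule.smul_mem _ _ (Submodule.subset_span (by simp)))
      have hrank := rank_span_le (R := ℝ) ({a, b} : Set E)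
      rw [hspan, rank_top] at hrank
      have hcard : Cardinal.mk ({a, b} : Set E) ≤ 2 := by
        have h1 := Cardinal.mk_insert_le (s := ({b} : Set E)) (a := a)
        have : (1 + 1 : Cardinal) = 2 := one_add_one_eq_two
        rw [← this]
        simpa using h1
      exact absurd hdim (not_lt_of_ge (hrank.trans hcard))
    · -- ker side is "fat": use key with id - P
      push_neg at hthin'
      obtain ⟨x₀, hx₀, hx₀'⟩ := hthin' 0
      have x₀ne : x₀ ≠ 0 := by have := hx₀' 0; simpa using this
      obtain ⟨x, hx, hx'⟩ := hthin' x₀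
      have xne : x ≠ 0 := by have := hx' 0; simpa using this
      set P' : E →ₗ[ℝ] E := LinearMap.id - P with hP'def
      have hP'app : ∀ z : E, P' z = z - P z := fun z => rfl
      have hP' : ∀ z : E, ‖P' z‖ + ‖z - P' z‖ = ‖z‖ := by
        intro z
        rw [hP'app, show z - (z - P z) = P z by abel]
        linarith [hP z]
      have hY' : ∃ y : E, P' y = 0 ∧ y ≠ 0 := by
        obtain ⟨w, hw, wne⟩ := hX
        exact ⟨w, by rw [hP'app, hw, sub_self], wne⟩
      refine key P' Q hQproj hP' hQ hY' hU hV (‖x₀‖⁻¹ • x₀) (‖x‖⁻¹ • x) ?_ ?_ ?_ ?_ ?_ ?_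
      · rw [hP'app, map_smul, hx₀, smul_zero, sub_zero]
      · rw [hP'app, map_smul, hx, smul_zero, sub_zero]
      · exact norm_smul_inv_norm x₀ne
      · exact norm_smul_inv_norm xne
      · intro h
        apply hx' (-(‖x‖ * ‖x₀‖⁻¹))
        have h2 : ‖x‖ • (‖x₀‖⁻¹ • x₀ + ‖x‖⁻¹ • x) = 0 := by rw [h, smul_zero]
        rw [smul_add, smul_smul, smul_smul,
          mul_inv_cancel₀ (norm_ne_zero_iff.mpr xne), one_smul] at h2
        rw [neg_smul]
        exact eq_neg_of_add_eq_zero_right h2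
      · intro h
        apply hx' (‖x‖ * ‖x₀‖⁻¹)
        have h2 : ‖x‖ • (‖x₀‖⁻¹ • x₀ - ‖x‖⁻¹ • x) = 0 := by rw [h, smul_zero]
        rw [smul_sub, smul_smul, smul_smul,
          mul_inv_cancel₀ (norm_ne_zero_iff.mpr xne), one_smul] at h2
        exact (sub_eq_zero.mp h2).symm
  · -- range side is "fat": use key with P
    push_neg at hthin
    obtain ⟨x₀, hx₀, hx₀'⟩ := hthin 0
    have x₀ne : x₀ ≠ 0 := by have := hx₀' 0; simpa using this
    obtain ⟨x, hx, hx'⟩ := hthin x₀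
    have xne : x ≠ 0 := by have := hx' 0; simpa using this
    refine key P Q hQproj hP hQ hY hU hV (‖x₀‖⁻¹ • x₀) (‖x‖⁻¹ • x) ?_ ?_ ?_ ?_ ?_ ?_
    · rw [map_smul, hx₀]
    · rw [map_smul, hx]
    · exact norm_smul_inv_norm x₀ne
    · exact norm_smul_inv_norm xne
    · intro h
      apply hx' (-(‖x‖ * ‖x₀‖⁻¹))
      have h2 : ‖x‖ • (‖x₀‖⁻¹ • x₀ + ‖x‖⁻¹ • x) = 0 := by rw [h, smul_zero]
      rw [smul_add, smul_smul, smul_smul,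
        mul_inv_cancel₀ (norm_ne_zero_iff.mpr xne), one_smul] at h2
      rw [neg_smul]
      exact eq_neg_of_add_eq_zero_right h2
    · intro h
      apply hx' (‖x‖ * ‖x₀‖⁻¹)
      have h2 : ‖x‖ • (‖x₀‖⁻¹ • x₀ - ‖x‖⁻¹ • x) = 0 := by rw [h, smul_zero]
      rw [smul_sub, smul_smul, smul_smul,
        mul_inv_cancel₀ (norm_ne_zero_iff.mpr xne), one_smul] at h2
      exact (sub_eq_zero.mp h2).symm
end

section
/- Let E be a Banach space and P, Q : E → E two L^p-projections for the same p with 1 ≤ p < ∞, p ≠ 2. Then P and Q commute: P Q = Q P. -/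
/-!
Fix `x` with `P x = x` and put `y = Q x`, `z = x - Q x`, `u = y - P y`; then `z - P z = -u`.
Computing `‖y + t • z‖ ^ p` once through `Q` and once through `P` shows that
`t ↦ ‖P y + t • P z‖ ^ p` is a constant plus `W * |t| ^ p - U * |1 - t| ^ p`, where
`U = ‖u‖ ^ p ≤ W`. The left side is convex in `t`. For `p < 2` the concave kink `-U * |1 - t| ^ p`
at `t = 1` is of order `s ^ p` and beats the `O(s ^ 2)` curvature of `W * |t| ^ p` there; for
`p > 2` the `O(s ^ p)` convexity of `W * |t| ^ p` at `t = 0` cannot absorb the curvature of order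
`s ^ 2` of `-U * |1 - t| ^ p`. Either way `U = 0`, so `Q` maps the range of `P` into itself.
Applied also to the complementary projection `1 - P`, this gives `P Q = Q P`.
-/

open Real Set Filter Topology

theorem ConvexOn.two_mul_le_add {V : Type*} [AddCommGroup V] [Module ℝ V] {f : V → ℝ}
    (hf : ConvexOn ℝ univ f) (t s : V) : 2 * f t ≤ f (t + s) + f (t - s) := by
  have h := hf.2 (mem_univ (t + s)) (mem_univ (t - s)) (by norm_num : (0 : ℝ) ≤ 1 / 2)
    (by norm_num : (0 : ℝ) ≤ 1 / 2) (by norm_num)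
  rw [show (1 / 2 : ℝ) • (t + s) + (1 / 2 : ℝ) • (t - s) = t by module, smul_eq_mul,
    smul_eq_mul] at h
  linarith

theorem convexOn_norm_add_smul_rpow {E : Type*} [NormedAddCommGroup E] [NormedSpace ℝ E]
    {p : ℝ} (hp : 1 ≤ p) (a b : E) : ConvexOn ℝ univ fun t : ℝ => ‖a + t • b‖ ^ p := by
  refine ⟨convex_univ, fun x _ y _ α β hα hβ hαβ => ?_⟩
  have hnorm : ‖a + (α • x + β • y) • b‖ ≤ α * ‖a + x • b‖ + β * ‖a + y • b‖ :=
    calc ‖a + (α • x + β • y) • b‖ = ‖(α + β) • a + (α • x + β • y) • b‖ := by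
          rw [hαβ, one_smul]
      _ = ‖α • (a + x • b) + β • (a + y • b)‖ := by congr 1; module
      _ ≤ α * ‖a + x • b‖ + β * ‖a + y • b‖ := by
          refine (norm_add_le _ _).trans_eq ?_
          rw [norm_smul_of_nonneg hα, norm_smul_of_nonneg hβ]
  calc ‖a + (α • x + β • y) • b‖ ^ p ≤ (α * ‖a + x • b‖ + β * ‖a + y • b‖) ^ p :=
        rpow_le_rpow (norm_nonneg _) hnorm (by linarith)
    _ ≤ α • ‖a + x • b‖ ^ p + β • ‖a + y • b‖ ^ p :=
        (convexOn_rpow hp).2 (norm_nonneg _) (norm_nonneg _) hα hβ hαβ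

theorem one_add_rpow_add_one_sub_rpow_le {p s : ℝ} (hp1 : 1 ≤ p) (hp2 : p ≤ 2) (hs : |s| ≤ 1) :
    (1 + s) ^ p + (1 - s) ^ p ≤ 2 + 2 * (p - 1) * s ^ 2 := by
  obtain ⟨hs₁, hs₂⟩ := abs_le.mp hs
  have bernoulli (r : ℝ) (hr₁ : -1 ≤ r) : (1 + r) ^ p ≤ (1 + r) * (1 + (p - 1) * r) := by
    have h1r : 0 ≤ 1 + r := by linarith
    calc (1 + r) ^ p = (1 + r) * (1 + r) ^ (p - 1) := by
          rw [← rpow_one_add' h1r (by linarith), add_sub_cancel]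
      _ ≤ (1 + r) * (1 + (p - 1) * r) :=
          mul_le_mul_of_nonneg_left
            (rpow_one_add_le_one_add_mul_self hr₁ (by linarith) (by linarith)) h1r
  have h₁ := bernoulli s hs₁
  have h₂ := bernoulli (-s) (by linarith)
  rw [← sub_eq_add_neg] at h₂
  linarith

theorem le_one_add_rpow_add_one_sub_rpow {p s : ℝ} (hp : 2 ≤ p) (hs : |s| ≤ 1) :
    2 + p * s ^ 2 ≤ (1 + s) ^ p + (1 - s) ^ p := by
  obtain ⟨hs₁, hs₂⟩ := abs_le.mp hs
  have bernoulli (r : ℝ) (hr₁ : -1 ≤ r) : 1 + p / 2 * (2 * r + r ^ 2) ≤ (1 + r) ^ p := by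
    have h1r : 0 ≤ 1 + r := by linarith
    calc 1 + p / 2 * (2 * r + r ^ 2) ≤ (1 + (2 * r + r ^ 2)) ^ (p / 2) :=
          one_add_mul_self_le_rpow_one_add (by nlinarith) (by linarith)
      _ = (1 + r) ^ p := by
          rw [show 1 + (2 * r + r ^ 2) = (1 + r) ^ (2 : ℝ) by rw [rpow_two]; ring,
            ← rpow_mul h1r, mul_div_cancel₀ _ two_ne_zero]
  have h₁ := bernoulli s hs₁
  have h₂ := bernoulli (-s) (by linarith)
  rw [← sub_eq_add_neg] at h₂
  linarith

theorem nonpos_of_forall_le_mul_rpow {U C e : ℝ} (he : 0 < e)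
    (h : ∀ s, 0 < s → s ≤ 1 → U ≤ C * s ^ e) : U ≤ 0 := by
  have hlim : Tendsto (fun s : ℝ => C * s ^ e) (𝓝[>] 0) (𝓝 0) := by
    have h0 : Tendsto (fun s : ℝ => C * s ^ e) (𝓝 0) (𝓝 (C * 0 ^ e)) :=
      (continuousAt_rpow_const 0 e (Or.inr he.le)).tendsto.const_mul C
    rw [zero_rpow he.ne', mul_zero] at h0
    exact h0.mono_left nhdsWithin_le_nhds
  refine ge_of_tendsto hlim ?_
  filter_upwards [Ioc_mem_nhdsGT one_pos] with s hs using h s hs.1 hs.2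

theorem nonpos_of_convexOn_sub_rpow_of_lt_two {p W U : ℝ} (hp1 : 1 ≤ p) (hp2 : p < 2)
    (hW : 0 ≤ W) (h : ConvexOn ℝ univ fun t : ℝ => W * |t| ^ p - U * |1 - t| ^ p) : U ≤ 0 := by
  refine nonpos_of_forall_le_mul_rpow (C := (p - 1) * W) (by linarith : 0 < 2 - p)
    fun s hs0 hs1 => ?_
  have hs : |s| ≤ 1 := by rwa [abs_of_pos hs0]
  have hmid := h.two_mul_le_add 1 s
  rw [abs_one, one_rpow, sub_self, abs_zero, zero_rpow (by linarith), sub_add_cancel_left,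
    sub_sub_cancel, abs_neg, abs_of_pos hs0, abs_of_nonneg (by linarith : (0 : ℝ) ≤ 1 + s),
    abs_of_nonneg (by linarith : (0 : ℝ) ≤ 1 - s)] at hmid
  have hbound := mul_le_mul_of_nonneg_left (one_add_rpow_add_one_sub_rpow_le hp1 hp2.le hs) hW
  have hsq : s ^ 2 = s ^ (2 - p) * s ^ p := by rw [← rpow_add hs0, sub_add_cancel, rpow_two]
  rw [hsq] at hbound
  refine le_of_mul_le_mul_right ?_ (rpow_pos_of_pos hs0 p)
  linarith

theorem nonpos_of_convexOn_sub_rpow_of_two_lt {p W U : ℝ} (hp : 2 < p) (hU : 0 ≤ U)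
    (h : ConvexOn ℝ univ fun t : ℝ => W * |t| ^ p - U * |1 - t| ^ p) : U ≤ 0 := by
  refine nonpos_of_forall_le_mul_rpow (C := 2 * W / p) (by linarith : 0 < p - 2)
    fun s hs0 hs1 => ?_
  have hs : |s| ≤ 1 := by rwa [abs_of_pos hs0]
  have hmid := h.two_mul_le_add 0 s
  rw [abs_zero, zero_rpow (by linarith), sub_zero, abs_one, one_rpow, zero_add, zero_sub,
    abs_neg, abs_of_pos hs0, sub_neg_eq_add, abs_of_nonneg (by linarith : (0 : ℝ) ≤ 1 + s),
    abs_of_nonneg (by linarith : (0 : ℝ) ≤ 1 - s)] at hmid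
  have hbound := mul_le_mul_of_nonneg_left (le_one_add_rpow_add_one_sub_rpow hp.le hs) hU
  have hpow : s ^ p = s ^ (p - 2) * s ^ 2 := by rw [← rpow_two, ← rpow_add hs0, sub_add_cancel]
  rw [hpow] at hmid
  refine le_of_mul_le_mul_right ?_ (by positivity : 0 < p * s ^ 2)
  rw [show 2 * W / p * s ^ (p - 2) * (p * s ^ 2) = 2 * W * (s ^ (p - 2) * s ^ 2) by
    field_simp]
  linarith

theorem eq_zero_of_convexOn_sub_rpow {p W U : ℝ} (hp1 : 1 ≤ p) (hp2 : p ≠ 2) (hW : 0 ≤ W)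
    (hU : 0 ≤ U) (h : ConvexOn ℝ univ fun t : ℝ => W * |t| ^ p - U * |1 - t| ^ p) : U = 0 :=
  le_antisymm (hp2.lt_or_gt.elim (nonpos_of_convexOn_sub_rpow_of_lt_two hp1 · hW h)
    (nonpos_of_convexOn_sub_rpow_of_two_lt · hU h)) hU

section Projections

variable {E : Type*} [NormedAddCommGroup E] [NormedSpace ℝ E] {p : ℝ} {P Q : E →ₗ[ℝ] E}

theorem norm_map_add_smul_map_rpow (hP : ∀ x, ‖P x‖ ^ p + ‖x - P x‖ ^ p = ‖x‖ ^ p)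
    (hQ : ∀ x, ‖Q x‖ ^ p + ‖x - Q x‖ ^ p = ‖x‖ ^ p) {y z : E} (hy : Q y = y) (hz : Q z = 0)
    (hyz : P (y + z) = y + z) (t : ℝ) :
    ‖P y + t • P z‖ ^ p = ‖P y‖ ^ p + ‖y - P y‖ ^ p
      + (‖P z‖ ^ p + ‖y - P y‖ ^ p) * |t| ^ p - ‖y - P y‖ ^ p * |1 - t| ^ p := by
  have norm_smul_rpow (c : ℝ) (v : E) : ‖c • v‖ ^ p = |c| ^ p * ‖v‖ ^ p := by
    rw [norm_smul, norm_eq_abs, mul_rpow (abs_nonneg c) (norm_nonneg v)]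
  rw [map_add] at hyz
  have hzP : z - P z = -(y - P y) := by linear_combination (norm := module) -hyz
  have hQt := hQ (y + t • z)
  rw [map_add, map_smul, hy, hz, smul_zero, add_zero, add_sub_cancel_left, norm_smul_rpow,
    ← hP y, ← hP z, hzP, norm_neg] at hQt
  have hPt := hP (y + t • z)
  rw [map_add, map_smul, show y + t • z - (P y + t • P z) = (1 - t) • (y - P y) by
    linear_combination (norm := module) t • hzP, norm_smul_rpow] at hPt
  linarith

theorem apply_apply_eq_of_apply_eq (hp1 : 1 ≤ p) (hp2 : p ≠ 2)
    (hP : ∀ x, ‖P x‖ ^ p + ‖x - P x‖ ^ p = ‖x‖ ^ p) (hQidem : ∀ x, Q (Q x) = Q x)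
    (hQ : ∀ x, ‖Q x‖ ^ p + ‖x - Q x‖ ^ p = ‖x‖ ^ p) {x : E} (hx : P x = x) :
    P (Q x) = Q x := by
  have hsplit := norm_map_add_smul_map_rpow hP hQ (hQidem x)
    (by rw [map_sub, hQidem, sub_self] : Q (x - Q x) = 0)
    (by rwa [add_sub_cancel] : P (Q x + (x - Q x)) = Q x + (x - Q x))
  set U := ‖Q x - P (Q x)‖ ^ p
  set W := ‖P (x - Q x)‖ ^ p + U
  have hconv : ConvexOn ℝ univ fun t : ℝ => W * |t| ^ p - U * |1 - t| ^ p :=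
    ((convexOn_norm_add_smul_rpow hp1 (P (Q x)) (P (x - Q x))).add_const
      (-(‖P (Q x)‖ ^ p + U))).congr fun t _ => by simp only [Pi.add_apply, hsplit t]; ring
  have hU : U = 0 := eq_zero_of_convexOn_sub_rpow hp1 hp2 (by positivity) (by positivity) hconv
  rw [rpow_eq_zero (norm_nonneg _) (by linarith), norm_eq_zero, sub_eq_zero] at hU
  exact hU.symm

theorem apply_apply_eq_zero_of_apply_eq_zero (hp1 : 1 ≤ p) (hp2 : p ≠ 2)
    (hP : ∀ x, ‖P x‖ ^ p + ‖x - P x‖ ^ p = ‖x‖ ^ p) (hQidem : ∀ x, Q (Q x) = Q x)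
    (hQ : ∀ x, ‖Q x‖ ^ p + ‖x - Q x‖ ^ p = ‖x‖ ^ p) {x : E} (hx : P x = 0) :
    P (Q x) = 0 := by
  have hP' (v : E) : ‖(LinearMap.id - P : E →ₗ[ℝ] E) v‖ ^ p
      + ‖v - (LinearMap.id - P : E →ₗ[ℝ] E) v‖ ^ p = ‖v‖ ^ p := by
    rw [LinearMap.sub_apply, LinearMap.id_apply, sub_sub_cancel, add_comm, hP v]
  have h := apply_apply_eq_of_apply_eq hp1 hp2 hP' hQidem hQ (x := x) (by simp [hx])
  rwa [LinearMap.sub_apply, LinearMap.id_apply, sub_eq_self] at h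

end Projections

theorem lp_projections_commute_general
    {E : Type*} [NormedAddCommGroup E] [NormedSpace ℝ E]
    (p : ℝ) (hp1 : 1 ≤ p) (hp2 : p ≠ 2)
    (P Q : E →ₗ[ℝ] E)
    (hPproj : ∀ x : E, P (P x) = P x)
    (hQproj : ∀ x : E, Q (Q x) = Q x)
    (hP : ∀ x : E, (‖P x‖ ^ p + ‖x - P x‖ ^ p) ^ (1 / p) = ‖x‖)
    (hQ : ∀ x : E, (‖Q x‖ ^ p + ‖x - Q x‖ ^ p) ^ (1 / p) = ‖x‖) :
    ∀ x : E, P (Q x) = Q (P x) := by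
  have rpow_form (R : E →ₗ[ℝ] E) (hR : ∀ x : E, (‖R x‖ ^ p + ‖x - R x‖ ^ p) ^ (1 / p) = ‖x‖)
      (x : E) : ‖R x‖ ^ p + ‖x - R x‖ ^ p = ‖x‖ ^ p :=
    (rpow_inv_eq (by positivity) (norm_nonneg x) (by linarith)).1 (by rw [← one_div]; exact hR x)
  intro x
  have hfix : P (Q (P x)) = Q (P x) :=
    apply_apply_eq_of_apply_eq hp1 hp2 (rpow_form P hP) hQproj (rpow_form Q hQ) (hPproj x)
  have hker : P (Q (x - P x)) = 0 :=
    apply_apply_eq_zero_of_apply_eq_zero hp1 hp2 (rpow_form P hP) hQproj (rpow_form Q hQ)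
      (by rw [map_sub, hPproj, sub_self])
  calc P (Q x) = P (Q (P x)) + P (Q (x - P x)) := by rw [← map_add, ← map_add, add_sub_cancel]
    _ = Q (P x) := by rw [hfix, hker, add_zero]

theorem lp_projections_commute
    {E : Type*} [NormedAddCommGroup E] [NormedSpace ℝ E] [CompleteSpace E]
    (p : ℝ) (hp1 : 1 ≤ p) (hp2 : p ≠ 2)
    (P Q : E →ₗ[ℝ] E)
    (hPproj : ∀ x : E, P (P x) = P x)
    (hQproj : ∀ x : E, Q (Q x) = Q x)
    (hP : ∀ x : E, (‖P x‖ ^ p + ‖x - P x‖ ^ p) ^ (1 / p) = ‖x‖)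
    (hQ : ∀ x : E, (‖Q x‖ ^ p + ‖x - Q x‖ ^ p) ^ (1 / p) = ‖x‖) :
    ∀ x : E, P (Q x) = Q (P x) :=
  lp_projections_commute_general p hp1 hp2 P Q hPproj hQproj hP hQ
end
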